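/- In the quantum cohomology ring QH*(OG(n+1,2n+2)) presented as ℤ[τ_1,...,τ_n,q]/I, where I is generated by the relations τ_i² + 2Σ_{k=1}^{i−1}(−1)^k τ_{i+k}τ_{i−k} + (−1)^i τ_{2i} = 0 for 1 ≤ i ≤ n−1 (with τ_j = 0 for j > n) and τ_n² = q: for any strict partition λ with λ_1 < n, defining the class τ_λ by the Pfaffian Giambelli formulas, one has τ_n · τ_λ = τ_{(n,λ)}, and for λ with λ_1 = n, τ_n · τ_λ = τ_{λ∖(n)} · q. -/

import Mathlib

open MvPolynomial

variable (n : ℕ)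

/-- The polynomial ring `ℤ[τ_1,…,τ_n,q]`: variable `i < n` is `τ_{i+1}` and
variable `n` is `q`. -/
abbrev PolyRing (n : ℕ) : Type := MvPolynomial (Fin (n + 1)) ℤ

/-- The generator `τ_j` (as a polynomial), with `τ_0 = 1` and `τ_j = 0` for
`j < 0` or `j > n`. -/
noncomputable def tauGen (n : ℕ) (j : ℤ) : PolyRing n :=
  if j = 0 then 1
  else if h : 1 ≤ j ∧ j ≤ n then X ⟨j.toNat - 1, by omega⟩ else 0

/-- The variable `q`. -/
noncomputable def qGen (n : ℕ) : PolyRing n := X ⟨n, by omega⟩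

/-- The relation `τ_i² + 2 Σ_{k=1}^{i−1} (−1)^k τ_{i+k} τ_{i−k} + (−1)^i τ_{2i}`. -/
noncomputable def relation (n : ℕ) (i : ℕ) : PolyRing n :=
  tauGen n i ^ 2
    + 2 * ∑ k ∈ Finset.Icc 1 (i - 1),
        (-1 : PolyRing n) ^ k * tauGen n ((i : ℤ) + k) * tauGen n ((i : ℤ) - k)
    + (-1 : PolyRing n) ^ i * tauGen n (2 * (i : ℤ))

/-- The ideal generated by the relations for `1 ≤ i ≤ n−1` together with the
quantum relation `τ_n² − q`. -/
noncomputable def qhIdeal (n : ℕ) : Ideal (PolyRing n) :=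
  Ideal.span ((relation n '' Set.Icc 1 (n - 1)) ∪ {tauGen n n ^ 2 - qGen n})

/-- The quantum cohomology ring `QH^*(OG) = ℤ[τ_1,…,τ_n,q]/I`. -/
abbrev QH (n : ℕ) : Type := PolyRing n ⧸ qhIdeal n

/-- The special Schubert class `τ_j` in `QH^*(OG)`. -/
noncomputable def tau (n : ℕ) (j : ℤ) : QH n := Ideal.Quotient.mk _ (tauGen n j)

/-- The class `q` in `QH^*(OG)`. -/
noncomputable def qCl (n : ℕ) : QH n := Ideal.Quotient.mk _ (qGen n)

/-- The two-condition class
`τ_{i,j} = τ_i τ_j + 2 Σ_{k=1}^{j−1} (−1)^k τ_{i+k} τ_{j−k} + (−1)^j τ_{i+j}`,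
with `τ_{i,0} = τ_i` and vanishing for negative indices. -/
noncomputable def tauTwo (n : ℕ) (i j : ℤ) : QH n :=
  if i < 0 ∨ j < 0 then 0
  else if j = 0 then tau n i
  else tau n i * tau n j
    + 2 * ∑ k ∈ Finset.Icc 1 (j.toNat - 1),
        (-1 : QH n) ^ k * tau n (i + k) * tau n (j - k)
    + (-1 : QH n) ^ j.toNat * tau n (i + j)

/-- The Schubert class `τ_λ` for a strict partition `λ`, defined by the
Pfaffian Giambelli formula
`τ_λ = Σ_{j=1}^{m-1} (−1)^{j−1} τ_{λ_j,λ_m} τ_{λ∖{λ_j,λ_m}}` (the partition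
being padded with a zero part to have even length `m`); fuel-based recursion
on the length of the list. -/
noncomputable def tauAux (n : ℕ) : ℕ → List ℤ → QH n
  | _, [] => 1
  | _, [a] => tau n a
  | _, [a, b] => tauTwo n a b
  | 0, _ => 1
  | fuel + 1, ν =>
      let μ := if ν.length % 2 = 0 then ν else ν ++ [0]
      let m := μ.length
      ∑ j ∈ Finset.range (m - 1),
        (-1 : QH n) ^ j * tauTwo n (μ.getD j 0) (μ.getD (m - 1) 0)
          * tauAux n fuel ((μ.eraseIdx (m - 1)).eraseIdx j)

noncomputable def tauCl (n : ℕ) (lam : List ℤ) : QH n := tauAux n lam.length lam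

/-- A strict partition, as a strictly decreasing list of positive integers. -/
def IsStrictPartition (l : List ℕ) : Prop := l.Pairwise (· > ·) ∧ ∀ x ∈ l, 0 < x

/-! Expand the Pfaffian `τ_{(n,λ)}` along the part `n`. Since `τ_{n+k} = 0` for `k > 0`, its entries
`τ_{n,j} = τ_n τ_j` factor, so the leading term is `τ_n τ_λ` and, by induction on the length, the
remaining terms are `τ_n` times an alternating sum `Σ_j ± τ_{λ_j} τ_{λ∖λ_j}` (or the same with
`τ_{λ_j,b}`). Expanding each `τ_{λ∖λ_j}` once more turns that sum into a double sum over ordered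
pairs of removed parts, whose terms cancel in pairs. The case `λ_1 = n` then follows from
`τ_n² = q`. -/

open Finset

namespace List

variable {α : Type*}

theorem getD_eraseIdx_of_lt (l : List α) (d : α) {i j : ℕ} (h : j < i) :
    (l.eraseIdx i).getD j d = l.getD j d := by
  simp only [getD_eq_getElem?_getD, getElem?_eraseIdx_of_lt h]

theorem getD_eraseIdx_of_ge (l : List α) (d : α) {i j : ℕ} (h : i ≤ j) :
    (l.eraseIdx i).getD j d = l.getD (j + 1) d := by
  simp only [getD_eq_getElem?_getD, getElem?_eraseIdx_of_ge h]

theorem eraseIdx_eraseIdx_of_le (l : List α) {i j : ℕ} (h : i ≤ j) :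
    (l.eraseIdx (j + 1)).eraseIdx i = (l.eraseIdx i).eraseIdx j := by
  ext k : 1
  simp only [getElem?_eraseIdx]
  split_ifs <;> first | rfl | omega

theorem odd_length_eraseIdx {l : List α} (hl : Even l.length) {j : ℕ} (hj : j < l.length) :
    Odd (l.eraseIdx j).length := by
  rw [length_eraseIdx_of_lt hj]
  exact Nat.Even.sub_odd (by omega) hl odd_one

end List

section Cancellation

variable {α R : Type*} [CommRing R]

/-- Removing the entries at positions `j` and `k` of a list in either order gives the same
list, with opposite signs `(-1) ^ (j + k)`, so the terms cancel in pairs. -/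
theorem sum_sum_eraseIdx_alternating_eq_zero (d : α) (w : α → α → R)
    (hw : ∀ x y, w x y = w y x) (F : List α → R) (l : List α) :
    ∑ j ∈ range l.length, ∑ k ∈ range (l.length - 1),
      (-1) ^ (j + k) * w (l.getD j d) ((l.eraseIdx j).getD k d) * F ((l.eraseIdx j).eraseIdx k)
      = 0 := by
  rw [← sum_product']
  set f : ℕ × ℕ → R := fun p =>
    (-1) ^ (p.1 + p.2) * w (l.getD p.1 d) ((l.eraseIdx p.1).getD p.2 d)
      * F ((l.eraseIdx p.1).eraseIdx p.2)
  have hcancel : ∀ i j, i ≤ j → f (j + 1, i) + f (i, j) = 0 := by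
    intro i j hij
    simp only [f, l.getD_eraseIdx_of_lt d (Nat.lt_succ_of_le hij), l.getD_eraseIdx_of_ge d hij,
      l.eraseIdx_eraseIdx_of_le hij, hw (l.getD (j + 1) d), pow_succ,
      show j + 1 + i = i + j + 1 by omega]
    ring
  refine sum_involution (fun p _ => if p.2 < p.1 then (p.2, p.1 - 1) else (p.2 + 1, p.1))
    ?_ ?_ ?_ ?_
  · rintro ⟨j, k⟩ -
    dsimp only
    split_ifs with hkj
    · obtain ⟨j, rfl⟩ : ∃ j', j = j' + 1 := ⟨j - 1, by omega⟩
      exact hcancel k j (by omega)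
    · rw [add_comm]
      exact hcancel j k (by omega)
  · rintro ⟨j, k⟩ - -
    dsimp only
    split_ifs <;> simp only [ne_eq, Prod.mk.injEq] <;> omega
  · rintro ⟨j, k⟩ hjk
    simp only [mem_product, mem_range] at hjk ⊢
    split_ifs <;> omega
  · rintro ⟨j, k⟩ -
    dsimp only
    split_ifs <;> simp only [Prod.mk.injEq, and_true, true_and] at * <;> omega

end Cancellation

/-- The Pfaffian (Giambelli) recursion for a function `P` on lists of parts, with single entries
`t` and pair entries `t₂`. The `odd` field is the expansion of a list of odd length padded with a
zero part, along that part, for which `t₂ i 0 = t i`. -/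
structure IsPfaffianExpansion {R : Type*} [CommRing R] (t : ℤ → R) (t₂ : ℤ → ℤ → R)
    (P : List ℤ → R) : Prop where
  odd (l : List ℤ) : Odd l.length →
    P l = ∑ j ∈ range l.length, (-1) ^ j * t (l.getD j 0) * P (l.eraseIdx j)
  concat (l : List ℤ) (b : ℤ) : Odd l.length →
    P (l ++ [b]) = ∑ j ∈ range l.length, (-1) ^ j * t₂ (l.getD j 0) b * P (l.eraseIdx j)

namespace IsPfaffianExpansion

variable {R : Type*} [CommRing R] {t : ℤ → R} {t₂ : ℤ → ℤ → R} {P : List ℤ → R}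

theorem sum_alternating_eraseIdx_eq_zero (hP : IsPfaffianExpansion t t₂ P) {l : List ℤ}
    (hl : Even l.length) :
    ∑ j ∈ range l.length, (-1) ^ j * t (l.getD j 0) * P (l.eraseIdx j) = 0 := by
  rw [← sum_sum_eraseIdx_alternating_eq_zero 0 (fun x y => t x * t y) (fun _ _ => mul_comm _ _) P l]
  refine sum_congr rfl fun j hj => ?_
  rw [hP.odd _ (List.odd_length_eraseIdx hl (mem_range.mp hj)), List.length_eraseIdx_of_lt (mem_range.mp hj), mul_sum]
  refine sum_congr rfl fun k _ => ?_
  ring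

theorem sum_alternating_eraseIdx_concat_eq_zero (hP : IsPfaffianExpansion t t₂ P) {l : List ℤ}
    (hl : Even l.length) (b : ℤ) :
    ∑ j ∈ range l.length, (-1) ^ j *
      (t (l.getD j 0) * P (l.eraseIdx j ++ [b]) + t₂ (l.getD j 0) b * P (l.eraseIdx j)) = 0 := by
  rw [← sum_sum_eraseIdx_alternating_eq_zero 0 (fun x y => t x * t₂ y b + t₂ x b * t y)
    (fun _ _ => by ring) P l]
  refine sum_congr rfl fun j hj => ?_
  rw [hP.concat _ _ (List.odd_length_eraseIdx hl (mem_range.mp hj)), hP.odd _ (List.odd_length_eraseIdx hl (mem_range.mp hj)),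
    List.length_eraseIdx_of_lt (mem_range.mp hj), mul_sum, mul_sum, ← sum_add_distrib, mul_sum]
  refine sum_congr rfl fun k _ => ?_
  ring

theorem mul_cons_of_even (hP : IsPfaffianExpansion t t₂ P) (a : ℤ) {l : List ℤ}
    (hl : Even l.length)
    (ih : ∀ j ∈ range l.length, t a * P (l.eraseIdx j) = P (a :: l.eraseIdx j)) :
    t a * P l = P (a :: l) := by
  rw [hP.odd (a :: l) (by simpa using hl.add_one), List.length_cons, sum_range_succ']
  simp only [List.getD_cons_succ, List.getD_cons_zero, List.eraseIdx_cons_succ,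
    List.eraseIdx_cons_zero, pow_zero, one_mul]
  have hsum : ∑ j ∈ range l.length, (-1) ^ (j + 1) * t (l.getD j 0) * P (a :: l.eraseIdx j)
      = -(t a * ∑ j ∈ range l.length, (-1) ^ j * t (l.getD j 0) * P (l.eraseIdx j)) := by
    rw [mul_sum, ← sum_neg_distrib]
    refine sum_congr rfl fun j hj => ?_
    rw [← ih j hj]
    ring
  rw [hsum, hP.sum_alternating_eraseIdx_eq_zero hl]
  ring

theorem mul_concat_cons (hP : IsPfaffianExpansion t t₂ P) {a : ℤ}
    (ha : ∀ b, t₂ a b = t a * t b) {l : List ℤ} (hl : Even l.length) (b : ℤ)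
    (ih : ∀ j ∈ range l.length, t a * P (l.eraseIdx j) = P (a :: l.eraseIdx j)) :
    t a * P (l ++ [b]) = P (a :: (l ++ [b])) := by
  have hodd : Odd (l.length + 1) := hl.add_one
  rw [← List.cons_append, hP.concat (a :: l) b (by simpa using hodd), List.length_cons,
    sum_range_succ', hP.odd (l ++ [b]) (by simpa using hodd), List.length_append,
    List.length_singleton, sum_range_succ]
  simp only [List.getD_cons_succ, List.getD_cons_zero, List.eraseIdx_cons_succ,
    List.eraseIdx_cons_zero, pow_zero, one_mul, ha, hl.neg_one_pow,
    List.getD_append_right _ _ _ _ le_rfl, Nat.sub_self, List.getD_cons_zero,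
    List.eraseIdx_append_of_length_le le_rfl, List.eraseIdx_cons_zero, List.append_nil]
  have hsum : ∑ j ∈ range l.length, (-1) ^ (j + 1) * t₂ (l.getD j 0) b * P (a :: l.eraseIdx j)
      = -(t a * ∑ j ∈ range l.length, (-1) ^ j * t₂ (l.getD j 0) b * P (l.eraseIdx j)) := by
    rw [mul_sum, ← sum_neg_distrib]
    refine sum_congr rfl fun j hj => ?_
    rw [← ih j hj]
    ring
  have hcancel := hP.sum_alternating_eraseIdx_concat_eq_zero hl b
  rw [sum_congr rfl fun j hj => by
    rw [List.getD_append _ _ _ _ (mem_range.mp hj),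
      List.eraseIdx_append_of_lt_length (mem_range.mp hj)]]
  simp only [mul_add, sum_add_distrib, ← mul_assoc] at hcancel
  rw [hsum]
  linear_combination t a * hcancel

theorem mul_cons (hP : IsPfaffianExpansion t t₂ P) {a : ℤ} (ha : ∀ b, t₂ a b = t a * t b)
    (l : List ℤ) : t a * P l = P (a :: l) := by
  induction h : l.length using Nat.strong_induction_on generalizing l with
  | _ m ih =>
    have ih_eraseIdx : ∀ l' : List ℤ, l'.length ≤ m → ∀ j ∈ range l'.length,
        t a * P (l'.eraseIdx j) = P (a :: l'.eraseIdx j) := by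
      intro l' hl' j hj
      refine ih _ ?_ _ rfl
      rw [List.length_eraseIdx_of_lt (mem_range.mp hj)]
      simp only [mem_range] at hj
      omega
    rcases l.eq_nil_or_concat with rfl | ⟨ν, b, rfl⟩
    · exact hP.mul_cons_of_even a (by simp) (by simp)
    rw [List.concat_eq_append] at h ⊢
    rcases Nat.even_or_odd ν.length with hν | hν
    · rw [List.length_append, List.length_singleton] at h
      exact hP.mul_concat_cons ha hν b (ih_eraseIdx ν (by omega))
    · exact hP.mul_cons_of_even a (by simpa using hν.add_one) (ih_eraseIdx _ h.le)

end IsPfaffianExpansion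

section SchubertClasses

variable {n : ℕ}

theorem tau_zero : tau n 0 = 1 := by
  simp [tau, tauGen]

theorem tau_eq_zero {j : ℤ} (hj0 : j ≠ 0) (hj : ¬(1 ≤ j ∧ j ≤ n)) : tau n j = 0 := by
  rw [tau, tauGen, if_neg hj0, dif_neg hj, map_zero]

theorem tauTwo_zero (i : ℤ) : tauTwo n i 0 = tau n i := by
  by_cases hi : i < 0
  · rw [tauTwo, if_pos (Or.inl hi), tau_eq_zero (by omega) (by omega)]
  · rw [tauTwo, if_neg (by omega), if_pos rfl]

-- All terms of `τ_{n,j}` but `τ_n τ_j` involve some `τ_{n+k}` with `k > 0`, which vanishes.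
theorem tauTwo_top (j : ℤ) : tauTwo n n j = tau n n * tau n j := by
  rcases lt_trichotomy j 0 with hj | rfl | hj
  · rw [tauTwo, if_pos (Or.inr hj), tau_eq_zero (j := j) (by omega) (by omega), mul_zero]
  · rw [tauTwo_zero, tau_zero, mul_one]
  · have htop : ∀ k : ℤ, 0 < k → tau n (n + k) = 0 :=
      fun k hk => tau_eq_zero (by omega) (by omega)
    rw [tauTwo, if_neg (by omega), if_neg hj.ne', htop j hj, mul_zero, add_zero,
      sum_eq_zero fun k hk => by rw [htop k (by have := (mem_Icc.mp hk).1; omega), mul_zero, zero_mul],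
      mul_zero, add_zero]

theorem tau_top_mul_self : tau n n * tau n n = qCl n := by
  rw [tau, qCl, ← map_mul, Ideal.Quotient.eq, ← sq]
  exact Ideal.subset_span (Set.mem_union_right _ rfl)

end SchubertClasses

section Giambelli

variable {n : ℕ}

theorem tauAux_of_length_le_two (f g : ℕ) {l : List ℤ} (hl : l.length ≤ 2) :
    tauAux n f l = tauAux n g l := by
  match l, hl with
  | [], _ | [_], _ | [_, _], _ => cases f <;> cases g <;> rfl

-- `hμ` splits the list padded to even length as `l ++ [b]`.
theorem tauAux_succ (f : ℕ) {ν l : List ℤ} {b : ℤ} (hν : 3 ≤ ν.length)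
    (hμ : (if ν.length % 2 = 0 then ν else ν ++ [0]) = l ++ [b]) :
    tauAux n (f + 1) ν
      = ∑ j ∈ range l.length, (-1) ^ j * tauTwo n (l.getD j 0) b * tauAux n f (l.eraseIdx j) := by
  match ν, hν with
  | _ :: _ :: _ :: _, _ =>
    rw [tauAux, hμ]
    · simp only [List.length_append, List.length_singleton, Nat.add_sub_cancel,
        List.getD_append_right _ _ _ _ le_rfl, Nat.sub_self, List.getD_cons_zero,
        List.eraseIdx_append_of_length_le le_rfl, List.eraseIdx_cons_zero, List.append_nil]
      refine sum_congr rfl fun j hj => ?_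
      rw [List.getD_append _ _ _ _ (mem_range.mp hj)]
    all_goals simp

theorem tauAux_eq_tauAux (f g : ℕ) (l : List ℤ) (hf : l.length ≤ f + 2) (hg : l.length ≤ g + 2) :
    tauAux n f l = tauAux n g l := by
  induction f generalizing g l with
  | zero => exact tauAux_of_length_le_two 0 g (by omega)
  | succ f ih =>
    rcases le_or_gt l.length 2 with hl | hl
    · exact tauAux_of_length_le_two _ _ hl
    obtain ⟨g, rfl⟩ : ∃ g', g = g' + 1 := ⟨g - 1, by omega⟩
    obtain ⟨l', b, hμ⟩ : ∃ l' b, (if l.length % 2 = 0 then l else l ++ [0]) = l' ++ [b] := by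
      split_ifs
      · rcases l.eq_nil_or_concat with rfl | ⟨l', b, rfl⟩
        · simp at hl
        · exact ⟨l', b, List.concat_eq_append ..⟩
      · exact ⟨l, 0, rfl⟩
    have hl' : l'.length ≤ l.length := by
      have := congrArg List.length hμ
      split_ifs at this <;> simp only [List.length_append, List.length_singleton] at this <;> omega
    rw [tauAux_succ f hl hμ, tauAux_succ g hl hμ]
    refine sum_congr rfl fun j hj => ?_
    have := List.length_eraseIdx_of_lt (mem_range.mp hj)
    rw [ih g _ (by omega) (by omega)]

theorem tauAux_eq_tauCl (f : ℕ) (l : List ℤ) (hf : l.length ≤ f + 2) :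
    tauAux n f l = tauCl n l :=
  tauAux_eq_tauAux f l.length l hf (by omega)

theorem tauCl_odd (l : List ℤ) (hl : Odd l.length) :
    tauCl n l = ∑ j ∈ range l.length, (-1) ^ j * tau n (l.getD j 0) * tauCl n (l.eraseIdx j) := by
  rcases lt_or_ge l.length 3 with hl3 | hl3
  · obtain ⟨a, rfl⟩ : ∃ a, l = [a] := List.length_eq_one_iff.mp (by obtain ⟨k, hk⟩ := hl; omega)
    simp [tauCl, tauAux]
  rw [← tauAux_eq_tauCl (l.length - 3 + 1) l (by omega),
    tauAux_succ _ hl3 (if_neg (Nat.odd_iff.mp hl ▸ one_ne_zero))]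
  refine sum_congr rfl fun j hj => ?_
  have := List.length_eraseIdx_of_lt (mem_range.mp hj)
  rw [tauTwo_zero, tauAux_eq_tauCl _ _ (by omega)]

theorem tauCl_concat (l : List ℤ) (b : ℤ) (hl : Odd l.length) :
    tauCl n (l ++ [b])
      = ∑ j ∈ range l.length, (-1) ^ j * tauTwo n (l.getD j 0) b * tauCl n (l.eraseIdx j) := by
  rcases lt_or_ge l.length 3 with hl3 | hl3
  · obtain ⟨a, rfl⟩ : ∃ a, l = [a] := List.length_eq_one_iff.mp (by obtain ⟨k, hk⟩ := hl; omega)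
    simp [tauCl, tauAux]
  have hlen : (l ++ [b]).length = l.length + 1 := by simp
  rw [← tauAux_eq_tauCl (l.length - 2 + 1) _ (by omega),
    tauAux_succ _ (by omega) (if_pos (Nat.even_iff.mp (hlen ▸ hl.add_one)))]
  refine sum_congr rfl fun j hj => ?_
  have := List.length_eraseIdx_of_lt (mem_range.mp hj)
  rw [tauAux_eq_tauCl _ _ (by omega)]

theorem isPfaffianExpansion_tauCl : IsPfaffianExpansion (tau n) (tauTwo n) (tauCl n) :=
  ⟨tauCl_odd, tauCl_concat⟩

end Giambelli

theorem statement17_general (n : ℕ) (lam : List ℕ) :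
    (lam.headD 0 < n →
      tau n n * tauCl n (lam.map fun a => (a : ℤ))
        = tauCl n ((n : ℤ) :: lam.map fun a => (a : ℤ)))
    ∧ (lam.headD 0 = n →
      tau n n * tauCl n (lam.map fun a => (a : ℤ))
        = tauCl n ((lam.map fun a => (a : ℤ)).tail) * qCl n) := by
  have h_cons := isPfaffianExpansion_tauCl.mul_cons (tauTwo_top (n := n))
  refine ⟨fun _ => h_cons _, fun h_head => ?_⟩
  rcases lam with _ | ⟨a, lam⟩
  · obtain rfl : n = 0 := h_head.symm
    simp [tauCl, tauAux, ← tau_top_mul_self, tau_zero]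
  · have h_map : ((a :: lam).map fun a => (a : ℤ)) = (n : ℤ) :: lam.map fun a => (a : ℤ) := by
      simp [← h_head]
    rw [h_map, List.tail_cons, ← h_cons, ← mul_assoc, tau_top_mul_self, mul_comm]

/-- In `QH^*(OG(n+1,2n+2)) = ℤ[τ_1,…,τ_n,q]/I`: for a strict partition `λ`
with `λ_1 < n`, `τ_n · τ_λ = τ_{(n,λ)}`, while for `λ` with `λ_1 = n`,
`τ_n · τ_λ = τ_{λ∖(n)} · q`. -/
theorem statement17 (n : ℕ) (hn : 1 ≤ n) (lam : List ℕ)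
    (hlam : IsStrictPartition lam) (hbd : ∀ x ∈ lam, x ≤ n) :
    (lam.headD 0 < n →
      tau n n * tauCl n (lam.map fun a => (a : ℤ))
        = tauCl n ((n : ℤ) :: lam.map fun a => (a : ℤ)))
    ∧ (lam.headD 0 = n →
      tau n n * tauCl n (lam.map fun a => (a : ℤ))
        = tauCl n ((lam.map fun a => (a : ℤ)).tail) * qCl n) :=
  statement17_general n lam
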